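/- Let n ≥ 1. For all α ∈ I_1 (i.e. rank α ≤ 1) and all η ∈ P_n, the following two integer identities hold: rank α − rank(αη) = Φ(α̂,η) − Φ(α,η), and rank α − rank(ηα) = Φ(η,α̂) − Φ(η,α). -/

import Mathlib

namespace TPM

/-- Vertex set `{1,…,n} ∪ {1',…,n'}`: `Sum.inl` = unprimed (upper row),
`Sum.inr` = primed (lower row). -/
abbrev V (n : ℕ) := Fin n ⊕ Fin n

/-- The partition monoid `P_n`: set partitions of the `2n`-element set `V n`,
encoded as equivalence relations (setoids). -/
abbrev PM (n : ℕ) := Setoid (V n)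

/-- Three-row vertex set of the product graph: top / middle / bottom. -/
abbrev W (n : ℕ) := Fin n ⊕ (Fin n ⊕ Fin n)

variable {n : ℕ}

/-- First factor: unprimed ↦ top, primed ↦ middle. -/
def topMid : V n → W n
  | Sum.inl i => Sum.inl i
  | Sum.inr i => Sum.inr (Sum.inl i)

/-- Second factor: unprimed ↦ middle, primed ↦ bottom. -/
def midBot : V n → W n
  | Sum.inl i => Sum.inr (Sum.inl i)
  | Sum.inr i => Sum.inr (Sum.inr i)

/-- Embedding of `V n` as top and bottom rows of the three-row set. -/
def topBot : V n → W n
  | Sum.inl i => Sum.inl i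
  | Sum.inr i => Sum.inr (Sum.inr i)

/-- Edge relation of the product graph `Γ(α,β)`. -/
def graphRel (α β : PM n) (x y : W n) : Prop :=
  (∃ u v : V n, α.r u v ∧ x = topMid u ∧ y = topMid v) ∨
  (∃ u v : V n, β.r u v ∧ x = midBot u ∧ y = midBot v)

/-- Connectivity (equivalence closure of the edge relation) in `Γ(α,β)`. -/
def conn (α β : PM n) : W n → W n → Prop := Relation.EqvGen (graphRel α β)

/-- Connectivity in `Γ(α,β)`, as a setoid on the three-row vertex set. -/
def connSetoid (α β : PM n) : Setoid (W n) :=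
  ⟨conn α β, Relation.EqvGen.is_equivalence _⟩

/-- The product of two partitions: `x,y` lie in the same block of `αβ` iff they are
connected in `Γ(α,β)`. -/
def pmul (α β : PM n) : PM n :=
  ⟨fun x y => conn α β (topBot x) (topBot y),
    ⟨fun _ => Relation.EqvGen.refl _, fun h => Relation.EqvGen.symm _ _ h, fun h h' => Relation.EqvGen.trans _ _ _ h h'⟩⟩

/-- A vertex of the three-row set lies in the middle row. -/
def isMid (x : W n) : Prop := ∃ i : Fin n, x = Sum.inr (Sum.inl i)

/-- `Φ(α,β)`: the number of floating components of `Γ(α,β)`, i.e. connected components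
all of whose vertices lie in the middle row. -/
noncomputable def Phi (α β : PM n) : ℕ :=
  Nat.card {c : Quotient (connSetoid α β) //
    ∀ x : W n, Quotient.mk (connSetoid α β) x = c → isMid x}

/-- The rank of a partition: the number of transversal blocks (blocks containing both an
unprimed and a primed element). -/
noncomputable def rnk (α : PM n) : ℕ :=
  Nat.card {c : Quotient α //
    (∃ i : Fin n, Quotient.mk α (Sum.inl i) = c) ∧ ∃ i : Fin n, Quotient.mk α (Sum.inr i) = c}

/-- Which row of `V n` a point lies in. -/
def side : V n → Bool
  | Sum.inl _ => true
  | Sum.inr _ => false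

/-- `α̂`: split each transversal of `α` into its unprimed part and its primed part. -/
def hat (α : PM n) : PM n :=
  ⟨fun x y => α.r x y ∧ side x = side y,
    ⟨fun x => ⟨α.iseqv.refl x, rfl⟩,
     fun h => ⟨α.iseqv.symm h.1, h.2.symm⟩,
     fun h h' => ⟨α.iseqv.trans h.1 h'.1, h.2.trans h'.2⟩⟩⟩

/-- The twisted product on `ℕ × P_n`:  `(i,α)(j,β) = (i + j + Φ(α,β), αβ)`. -/
noncomputable def tmul (a b : ℕ × PM n) : ℕ × PM n :=
  (a.1 + b.1 + Phi a.2 b.2, pmul a.2 b.2)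

/-- A congruence on a set equipped with a binary operation: an equivalence relation
compatible with the operation on both sides. -/
def IsCongruence {M : Type*} (mul : M → M → M) (σ : M → M → Prop) : Prop :=
  Equivalence σ ∧ ∀ x y a, σ x y → σ (mul a x) (mul a y) ∧ σ (mul x a) (mul y a)

/-- Green's relation `R`: equality of the right ideals `xM = yM`. -/
def greenR {M : Type*} (mul : M → M → M) (x y : M) : Prop :=
  Set.range (mul x) = Set.range (mul y)

/-- Green's relation `L`: `Mx = My`. -/
def greenL {M : Type*} (mul : M → M → M) (x y : M) : Prop :=
  Set.range (fun a => mul a x) = Set.range (fun a => mul a y)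

/-- The principal two-sided ideal `MxM`. -/
def jSet {M : Type*} (mul : M → M → M) (x : M) : Set M :=
  Set.range (fun p : M × M => mul (mul p.1 x) p.2)

/-- Green's relation `J`: `MxM = MyM`. -/
def greenJ {M : Type*} (mul : M → M → M) (x y : M) : Prop :=
  jSet mul x = jSet mul y

/-- Green's relation `H = R ∩ L`. -/
def greenH {M : Type*} (mul : M → M → M) (x y : M) : Prop :=
  greenR mul x y ∧ greenL mul x y

/-- Green's relation `D = R ∘ L`. -/
def greenD {M : Type*} (mul : M → M → M) (x y : M) : Prop :=
  ∃ z, greenR mul x z ∧ greenL mul z y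

/-- `pd(α,β)` satisfies `P`, where `α` has `p` transversals: there are representatives
`a s` of the upper parts of the `p` (pairwise distinct) transversals of `α`, with `b s`
representing the corresponding lower parts, and a permutation `π` with `P π` such that the
block of `β` containing `a s` contains `b (π s)`.  (For H-related `α, β ∈ D_p` this says
exactly that some representation of the permutational difference `pd(α,β)` satisfies `P`.) -/
def pdIn (p : ℕ) (P : Equiv.Perm (Fin p) → Prop) (α β : PM n) : Prop :=
  ∃ (a b : Fin p → Fin n) (π : Equiv.Perm (Fin p)),
    (∀ s t, α.r (Sum.inl (a s)) (Sum.inl (a t)) → s = t) ∧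
    (∀ s, α.r (Sum.inl (a s)) (Sum.inr (b s))) ∧
    (∀ s, β.r (Sum.inl (a s)) (Sum.inr (b (π s)))) ∧
    P π

/-- The relation `ν_N` on `D_p`, for a subgroup `N ≤ S_p`:  H-related pairs of rank-`p`
partitions whose permutational difference lies in `N`. -/
def nuRel (p : ℕ) (N : Subgroup (Equiv.Perm (Fin p))) (α β : PM n) : Prop :=
  rnk α = p ∧ rnk β = p ∧ greenH pmul α β ∧ pdIn p (· ∈ N) α β

/-- The congruence `(m, m+d)^♯` on the additive monoid `ℕ` (intended for `d ≥ 1`). -/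
def natCong (m d : ℕ) (i j : ℕ) : Prop :=
  i = j ∨ (m ≤ i ∧ m ≤ j ∧ i % d = j % d)

/-- `min θ ≤ i` for a congruence `θ` on `ℕ` (with `min Δ_ℕ = ∞`). -/
def minLE (θ : ℕ → ℕ → Prop) (i : ℕ) : Prop :=
  ∃ a b, θ a b ∧ a ≠ b ∧ a ≤ i

/-- `k ≤ min θ` for a congruence `θ` on `ℕ` (with `min Δ_ℕ = ∞`). -/
def leMin (k : ℕ) (θ : ℕ → ℕ → Prop) : Prop :=
  ∀ a b, θ a b → a ≠ b → k ≤ a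

/-- The possible entries of a C-matrix. -/
inductive CEntry : Type
  | delta | muUp | muDown | mu | lam | rho | R
  | nsym (q : ℕ) (N : Subgroup (Equiv.Perm (Fin q)))

/-- Whether a C-matrix entry is an N-symbol. -/
def isNsym : CEntry → Prop
  | CEntry.nsym _ _ => True
  | _ => False

/-- The allowed values of the symbol `ζ` in row types RT2, RT5, RT6. -/
def isZeta (e : CEntry) : Prop :=
  e = CEntry.mu ∨ e = CEntry.muUp ∨ e = CEntry.muDown ∨ e = CEntry.delta

/-- The allowed values of the symbol `ξ` in row types RT4–RT7: any of `μ,ρ,λ,R` if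
`d = 1`, and only `μ` if `d > 1`. -/
def xiOK (d : ℕ) (e : CEntry) : Prop :=
  e = CEntry.mu ∨ (d = 1 ∧ (e = CEntry.rho ∨ e = CEntry.lam ∨ e = CEntry.R))

/-- Row type RT1 for rows 0 and 1: all entries `Δ`. -/
def RT1 (M0 M1 : ℕ → CEntry) : Prop :=
  (∀ i, M0 i = CEntry.delta) ∧ (∀ i, M1 i = CEntry.delta)

/-- Row type RT2. -/
def RT2 (Θ0 Θ1 : ℕ → ℕ → Prop) (M0 M1 : ℕ → CEntry) : Prop :=
  Θ0 = Eq ∧ Θ1 = Eq ∧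
  ∃ i ζ, isZeta ζ ∧
    (∀ j, j < i → M0 j = CEntry.delta) ∧ (∀ j, i ≤ j → M0 j = CEntry.mu) ∧
    (∀ j, j < i → M1 j = CEntry.delta) ∧ M1 i = ζ ∧ (∀ j, i < j → M1 j = CEntry.mu)

/-- Row type RT3. -/
def RT3 (Θ0 : ℕ → ℕ → Prop) (M0 M1 : ℕ → CEntry) : Prop :=
  ∃ m ξ, Θ0 = natCong m 1 ∧ (ξ = CEntry.rho ∨ ξ = CEntry.lam ∨ ξ = CEntry.R) ∧
    (∀ i, M1 i = CEntry.delta) ∧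
    (∀ j, j < m → M0 j = CEntry.delta) ∧ (∀ j, m ≤ j → M0 j = ξ)

/-- Row type RT4. -/
def RT4 (Θ0 Θ1 : ℕ → ℕ → Prop) (M0 M1 : ℕ → CEntry) : Prop :=
  ∃ m d ξ, 1 ≤ d ∧ Θ0 = natCong m d ∧ Θ1 = natCong m d ∧ xiOK d ξ ∧
    (∀ j, j < m → M0 j = CEntry.delta ∧ M1 j = CEntry.delta) ∧
    (∀ j, m ≤ j → M0 j = ξ ∧ M1 j = ξ)

/-- Row type RT5. -/
def RT5 (Θ0 Θ1 : ℕ → ℕ → Prop) (M0 M1 : ℕ → CEntry) : Prop :=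
  ∃ m d i ξ ζ, 1 ≤ d ∧ i < m ∧ Θ0 = natCong m d ∧ Θ1 = natCong (m + 1) d ∧
    xiOK d ξ ∧ isZeta ζ ∧
    (∀ j, j < i → M0 j = CEntry.delta) ∧ (∀ j, i ≤ j → j < m → M0 j = CEntry.mu) ∧
    (∀ j, m ≤ j → M0 j = ξ) ∧
    (∀ j, j < i → M1 j = CEntry.delta) ∧ M1 i = ζ ∧
    (∀ j, i < j → j ≤ m → M1 j = CEntry.mu) ∧ (∀ j, m < j → M1 j = ξ)

/-- Row type RT6. -/
def RT6 (Θ0 Θ1 : ℕ → ℕ → Prop) (M0 M1 : ℕ → CEntry) : Prop :=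
  ∃ m l d ξ ζ, 1 ≤ d ∧ m < l ∧ Θ0 = natCong m d ∧ Θ1 = natCong l d ∧
    xiOK d ξ ∧ isZeta ζ ∧
    (∀ j, j < m → M0 j = CEntry.delta) ∧ (∀ j, m ≤ j → M0 j = ξ) ∧
    (∀ j, j < l - 1 → M1 j = CEntry.delta) ∧ M1 (l - 1) = ζ ∧ (∀ j, l ≤ j → M1 j = ξ)

/-- Row type RT7. -/
def RT7 (Θ0 Θ1 : ℕ → ℕ → Prop) (M0 M1 : ℕ → CEntry) : Prop :=
  ∃ m l d ξ, 1 ≤ d ∧ 0 < m ∧ m + 1 < l ∧ (l - 1) % d = m % d ∧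
    Θ0 = natCong m d ∧ Θ1 = natCong l d ∧ xiOK d ξ ∧
    (∀ j, j < m - 1 → M0 j = CEntry.delta) ∧ M0 (m - 1) = CEntry.mu ∧
    (∀ j, m ≤ j → M0 j = ξ) ∧
    (∀ j, j < l - 1 → M1 j = CEntry.delta) ∧ M1 (l - 1) = CEntry.mu ∧
    (∀ j, l ≤ j → M1 j = ξ)

/-- Row type RT8 for a row `q ≥ 2`: all entries `Δ`. -/
def RT8 (Mq : ℕ → CEntry) : Prop := ∀ i, Mq i = CEntry.delta

/-- Row type RT9 for a row `q ≥ 2`. -/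
def RT9 (q : ℕ) (Θq : ℕ → ℕ → Prop) (Mq : ℕ → CEntry) : Prop :=
  ∃ (i k : ℕ) (Ns : ℕ → Subgroup (Equiv.Perm (Fin q))),
    i ≤ k ∧ leMin k Θq ∧
    (∀ j, i ≤ j → j ≤ k → Ns j ≠ ⊥ ∧ (Ns j).Normal) ∧
    (∀ j j', i ≤ j → j ≤ j' → j' ≤ k → Ns j ≤ Ns j') ∧
    (∀ j, j < i → Mq j = CEntry.delta) ∧
    (∀ j, i ≤ j → j < k → Mq j = CEntry.nsym q (Ns j)) ∧
    (∀ j, k ≤ j → Mq j = CEntry.nsym q (Ns k))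

/-- Row type RT10 for a row `q ≥ 2`. -/
def RT10 (q : ℕ) (Θq : ℕ → ℕ → Prop) (Mq : ℕ → CEntry) : Prop :=
  ∃ (i m : ℕ) (Ns : ℕ → Subgroup (Equiv.Perm (Fin q))),
    i ≤ m ∧ Θq = natCong m 1 ∧
    (∀ j, i ≤ j → j < m → Ns j ≠ ⊥ ∧ (Ns j).Normal) ∧
    (∀ j j', i ≤ j → j ≤ j' → j' < m → Ns j ≤ Ns j') ∧
    (∀ j, j < i → Mq j = CEntry.delta) ∧
    (∀ j, i ≤ j → j < m → Mq j = CEntry.nsym q (Ns j)) ∧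
    (∀ j, m ≤ j → Mq j = CEntry.R)

/-- A C-pair for `P_n^Φ`: a descending chain `Θ = (θ_0 ⊇ ⋯ ⊇ θ_n)` of congruences on
`(ℕ,+)` together with a matrix `M = (M_{qi})`, `0 ≤ q ≤ n`, `i ∈ ℕ`, whose rows 0 and 1
jointly have one of the types RT1–RT7, whose rows `q ≥ 2` have one of the types RT8–RT10,
and which satisfies the verticality conditions (V1) and (V2). -/
def IsCPair (n : ℕ) (Θ : ℕ → ℕ → ℕ → Prop) (M : ℕ → ℕ → CEntry) : Prop :=
  (∀ q, q ≤ n → IsCongruence (· + ·) (Θ q)) ∧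
  (∀ q r, q ≤ r → r ≤ n → ∀ i j, Θ r i j → Θ q i j) ∧
  (RT1 (M 0) (M 1) ∨ RT2 (Θ 0) (Θ 1) (M 0) (M 1) ∨ RT3 (Θ 0) (M 0) (M 1) ∨
    RT4 (Θ 0) (Θ 1) (M 0) (M 1) ∨ RT5 (Θ 0) (Θ 1) (M 0) (M 1) ∨
    RT6 (Θ 0) (Θ 1) (M 0) (M 1) ∨ RT7 (Θ 0) (Θ 1) (M 0) (M 1)) ∧
  (∀ q, 2 ≤ q → q ≤ n → (RT8 (M q) ∨ RT9 q (Θ q) (M q) ∨ RT10 q (Θ q) (M q))) ∧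
  (∀ q i, 1 ≤ q → q ≤ n → isNsym (M q i) →
    ¬(M (q - 1) i = CEntry.delta ∨ M (q - 1) i = CEntry.muUp ∨
      M (q - 1) i = CEntry.muDown ∨ isNsym (M (q - 1) i))) ∧
  (∀ q i, 2 ≤ q → q ≤ n → M q i = CEntry.R → M (q - 1) i = CEntry.R)

/-- The relation `cg(Θ,M)` on `P_n^Φ` associated with a C-pair `(Θ,M)`: conditions
(C1)–(C8). -/
def cg (n : ℕ) (Θ : ℕ → ℕ → ℕ → Prop) (M : ℕ → ℕ → CEntry)
    (a b : ℕ × PM n) : Prop :=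
  -- (C1)
  (M (rnk a.2) a.1 = CEntry.delta ∧ M (rnk b.2) b.1 = CEntry.delta ∧
    Θ (rnk a.2) a.1 b.1 ∧ a.2 = b.2) ∨
  -- (C2)
  (M (rnk a.2) a.1 = CEntry.R ∧ M (rnk b.2) b.1 = CEntry.R) ∨
  -- (C3)
  (∃ p N, M (rnk a.2) a.1 = CEntry.nsym p N ∧ M (rnk b.2) b.1 = CEntry.nsym p N ∧
    Θ (rnk a.2) a.1 b.1 ∧ rnk a.2 = p ∧ greenH pmul a.2 b.2 ∧ pdIn p (· ∈ N) a.2 b.2) ∨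
  -- (C4)
  (M (rnk a.2) a.1 = CEntry.lam ∧ M (rnk b.2) b.1 = CEntry.lam ∧
    greenL pmul (hat a.2) (hat b.2)) ∨
  -- (C5)
  (M (rnk a.2) a.1 = CEntry.rho ∧ M (rnk b.2) b.1 = CEntry.rho ∧
    greenR pmul (hat a.2) (hat b.2)) ∨
  -- (C6)
  (M (rnk a.2) a.1 = CEntry.muDown ∧ M (rnk b.2) b.1 = CEntry.muDown ∧
    hat a.2 = hat b.2 ∧ greenL pmul a.2 b.2) ∨
  -- (C7)
  (M (rnk a.2) a.1 = CEntry.muUp ∧ M (rnk b.2) b.1 = CEntry.muUp ∧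
    hat a.2 = hat b.2 ∧ greenR pmul a.2 b.2) ∨
  -- (C8)
  (M (rnk a.2) a.1 = CEntry.mu ∧ M (rnk b.2) b.1 = CEntry.mu ∧
    hat a.2 = hat b.2 ∧
    ((rnk a.2 = rnk b.2 ∧ Θ (rnk a.2) a.1 b.1) ∨
     (rnk a.2 ≠ rnk b.2 ∧ Θ 0 (a.1 + rnk b.2) (b.1 + rnk a.2) ∧
        ¬ minLE (Θ (rnk a.2)) a.1 ∧ ¬ minLE (Θ (rnk b.2)) b.1) ∨
     (rnk a.2 ≠ rnk b.2 ∧ Θ 0 (a.1 + rnk b.2) (b.1 + rnk a.2) ∧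
        minLE (Θ (rnk a.2)) a.1 ∧ minLE (Θ (rnk b.2)) b.1)))

/-- The C-pair `(Θ,M)` is exceptional with exceptional row `q`, where
`θ_q = (m, m+2d)^♯`. -/
def ExcAt (n : ℕ) (Θ : ℕ → ℕ → ℕ → Prop) (M : ℕ → ℕ → CEntry) (q m d : ℕ) : Prop :=
  2 ≤ q ∧ q ≤ n ∧ 1 ≤ d ∧ Θ q = natCong m (2 * d) ∧
  ((2 < q ∧ M q m = CEntry.nsym q (alternatingGroup (Fin q))) ∨
   (q = 2 ∧ M 2 m = CEntry.delta ∧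
     (M 1 m = CEntry.mu ∨ M 1 m = CEntry.rho ∨ M 1 m = CEntry.lam ∨ M 1 m = CEntry.R) ∧
     (∀ i j, natCong m d i j → Θ 1 i j)))

/-- The exceptional congruence `cgx(Θ,M)` associated with an exceptional C-pair:
`cg(Θ,M)` together with the pairs of (C9). -/
def cgx (n : ℕ) (Θ : ℕ → ℕ → ℕ → Prop) (M : ℕ → ℕ → CEntry) (q m d : ℕ)
    (a b : ℕ × PM n) : Prop :=
  cg n Θ M a b ∨
  (rnk a.2 = q ∧ rnk b.2 = q ∧ natCong m d a.1 b.1 ∧ ¬ Θ q a.1 b.1 ∧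
    greenH pmul a.2 b.2 ∧ pdIn q (fun π => π ∉ alternatingGroup (Fin q)) a.2 b.2)

/-- The Rees relation of a subset `I`. -/
def rees {M : Type*} (I : Set M) (x y : M) : Prop := x = y ∨ (x ∈ I ∧ y ∈ I)

/-- A (possibly empty) ideal of `P_n^Φ`: `MIM ⊆ I`. -/
def tIdeal (n : ℕ) (I : Set (ℕ × PM n)) : Prop :=
  ∀ a b x, x ∈ I → tmul (tmul a x) b ∈ I

/-- `I(σ)`: the union of all ideals `I` of `P_n^Φ` whose Rees congruence is contained
in `σ`. -/
def Isig (n : ℕ) (σ : (ℕ × PM n) → (ℕ × PM n) → Prop) : Set (ℕ × PM n) :=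
  ⋃₀ {I | tIdeal n I ∧ ∀ x y, rees I x y → σ x y}

/-- The 0-twisted partition monoid `P_{n,0}^Φ`, carried by `Option (P_n)` with
`none` the zero element `✗`. -/
noncomputable def mul0 (a b : Option (PM n)) : Option (PM n) :=
  match a, b with
  | some α, some β => if Phi α β = 0 then some (pmul α β) else none
  | _, _ => none

/-- `rank a ≤ q`, where `rank ✗ = -∞`. -/
def rnkLE (a : Option (PM n)) (q : ℕ) : Prop :=
  ∀ α, a = some α → rnk α ≤ q

/-- The Rees congruence `R_q` on `P_{n,0}^Φ`. -/
def ReesQ (q : ℕ) (a b : Option (PM n)) : Prop :=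
  a = b ∨ (rnkLE a q ∧ rnkLE b q)

/-- Lift a relation on `P_n` to `P_{n,0}^Φ = P_n ∪ {✗}`. -/
def lift2 (r : PM n → PM n → Prop) (a b : Option (PM n)) : Prop :=
  ∃ α β, a = some α ∧ b = some β ∧ r α β

/-! If `rank α = 0` then `α̂ = α` and `αη` has rank `0`. If `α` has a single transversal, through
`a` and `b'`, then `Γ(α,η)` is `Γ(α̂,η)` with one extra edge `a — b''`. The component of `b''` in
`Γ(α̂,η)` avoids the top row: either it meets the bottom row, and then `Φ` does not change and
`αη` has one transversal; or it floats, and then the extra edge destroys exactly this floating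
component while `αη` has no transversal. The second identity is the first one for `α*` and `η*`,
since `(αη)* = η*α*`, `(α̂)* = (α*)^` and `Φ(η*,α*) = Φ(α,η)`. -/

end TPM

theorem Relation.EqvGen.map {A B : Type*} {r : A → A → Prop} {s : B → B → Prop} (f : A → B)
    (h : ∀ x y, r x y → s (f x) (f y)) {x y : A} (hxy : Relation.EqvGen r x y) :
    Relation.EqvGen s (f x) (f y) := by
  induction hxy with
  | rel _ _ hr => exact .rel _ _ (h _ _ hr)
  | refl => exact .refl _
  | symm _ _ _ ih => exact .symm _ _ ih
  | trans _ _ _ _ _ ih₁ ih₂ => exact .trans _ _ _ ih₁ ih₂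

theorem Quotient.card_subtype_congr {A B : Type*} {σ : Setoid A} {τ : Setoid B} (e : A ≃ B)
    (he : ∀ x y, σ x y ↔ τ (e x) (e y)) {p : Quotient σ → Prop} {q : Quotient τ → Prop}
    (hpq : ∀ x, p (Quotient.mk σ x) ↔ q (Quotient.mk τ (e x))) :
    Nat.card {c // p c} = Nat.card {c // q c} :=
  Nat.card_congr ((Quotient.congr e he).subtypeEquiv fun c => c.inductionOn hpq)

namespace Setoid

variable {A : Type*} (σ : Setoid A)

/-- `σ` with the classes of `a` and `b` merged. -/
def glue (a b : A) : Setoid A where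
  r x y := σ x y ∨ (σ x a ∨ σ x b) ∧ (σ y a ∨ σ y b)
  iseqv := by
    have hmem : ∀ {x y}, σ x y → (σ x a ∨ σ x b) → (σ y a ∨ σ y b) := fun hxy h =>
      h.imp (σ.trans' (σ.symm' hxy)) (σ.trans' (σ.symm' hxy))
    refine ⟨fun x => .inl (σ.refl' x), fun h => h.imp σ.symm' And.symm, ?_⟩
    rintro x y z (hxy | ⟨hx, hy⟩) (hyz | ⟨hy', hz⟩)
    · exact .inl (σ.trans' hxy hyz)
    · exact .inr ⟨hmem (σ.symm' hxy) hy', hz⟩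
    · exact .inr ⟨hx, hmem hyz hy⟩
    · exact .inr ⟨hx, hz⟩

variable {σ}

theorem le_glue (a b : A) : σ ≤ σ.glue a b := fun _ _ h => .inl h

theorem glue_le {τ : Setoid A} {a b : A} (h : σ ≤ τ) (hab : τ a b) : σ.glue a b ≤ τ := by
  rintro x y (hxy | ⟨hx, hy⟩)
  · exact h hxy
  · have toA : ∀ {z}, σ z a ∨ σ z b → τ z a := fun hz =>
      hz.elim (fun hza => h hza) (fun hzb => τ.trans' (h hzb) (τ.symm' hab))
    exact τ.trans' (toA hx) (τ.symm' (toA hy))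

theorem glue_iff_of_not {a b x y : A} (hxa : ¬σ x a) (hxb : ¬σ x b) :
    σ.glue a b x y ↔ σ x y :=
  ⟨fun h => h.resolve_right fun h' => h'.1.elim hxa hxb, .inl⟩

def classesWithin (P : A → Prop) : Set (Quotient σ) :=
  {c | ∀ x, Quotient.mk σ x = c → P x}

theorem mk_mem_classesWithin {P : A → Prop} {x : A} :
    Quotient.mk σ x ∈ σ.classesWithin P ↔ ∀ y, σ y x → P y :=
  forall_congr' fun _ => imp_congr_left Quotient.eq

theorem not_rel_of_mk_mem_classesWithin_sdiff {P : A → Prop} {a b x : A} (ha : ¬P a)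
    (hx : Quotient.mk σ x ∈ σ.classesWithin P \ {Quotient.mk σ b}) : ¬σ x a ∧ ¬σ x b :=
  ⟨fun hxa => ha (mk_mem_classesWithin.mp hx.1 a (σ.symm' hxa)),
    fun hxb => hx.2 (Quotient.sound hxb)⟩

theorem classesWithin_glue {P : A → Prop} {a : A} (b : A) (ha : ¬P a) :
    (σ.glue a b).classesWithin P =
      map_of_le (σ.le_glue a b) '' (σ.classesWithin P \ {Quotient.mk σ b}) := by
  ext c
  constructor
  · induction c using Quotient.inductionOn with | h x => ?_
    intro hx
    rw [mk_mem_classesWithin] at hx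
    have hxb : ¬σ x b := fun h => ha (hx a (.inr ⟨.inl (σ.refl' a), .inr h⟩))
    exact ⟨Quotient.mk σ x,
      ⟨mk_mem_classesWithin.mpr fun y hy => hx y (.inl hy), fun h => hxb (Quotient.exact h)⟩,
      rfl⟩
  · rintro ⟨c, hc, rfl⟩
    induction c using Quotient.inductionOn with | h y => ?_
    obtain ⟨hya, hyb⟩ := not_rel_of_mk_mem_classesWithin_sdiff ha hc
    rw [map_of_le, Quotient.map'_mk'', mk_mem_classesWithin]
    exact fun z hz => mk_mem_classesWithin.mp hc.1 z
      (σ.symm' ((glue_iff_of_not hya hyb).mp ((σ.glue a b).symm' hz)))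

theorem injOn_map_of_le_glue {P : A → Prop} {a : A} (b : A) (ha : ¬P a) :
    Set.InjOn (map_of_le (σ.le_glue a b)) (σ.classesWithin P \ {Quotient.mk σ b}) := by
  intro c hc c' _ hcc'
  induction c using Quotient.inductionOn with | h x => ?_
  induction c' using Quotient.inductionOn with | h y => ?_
  obtain ⟨hxa, hxb⟩ := not_rel_of_mk_mem_classesWithin_sdiff ha hc
  exact Quotient.sound ((glue_iff_of_not hxa hxb).mp (Quotient.exact hcc'))

theorem ncard_classesWithin_glue {P : A → Prop} {a : A} (b : A) (ha : ¬P a) :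
    ((σ.glue a b).classesWithin P).ncard = (σ.classesWithin P \ {Quotient.mk σ b}).ncard := by
  rw [classesWithin_glue b ha, (injOn_map_of_le_glue b ha).ncard_image]

end Setoid

namespace TPM

variable {n : ℕ}

theorem isLeft_topMid (u : V n) : (topMid u).isLeft = side u := by cases u <;> rfl

theorem isLeft_topBot (u : V n) : (topBot u).isLeft = side u := by cases u <;> rfl

theorem isLeft_eq_of_conn {α β : PM n} (hα : ∀ u v, α.r u v → side u = side v) {x y : W n}
    (h : conn α β x y) : x.isLeft = y.isLeft := by
  refine Setoid.ker_def.mp (Setoid.eqvGen_le (s := Setoid.ker Sum.isLeft) ?_ h)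
  rintro _ _ (⟨u, v, huv, rfl, rfl⟩ | ⟨u, v, -, rfl, rfl⟩)
  · exact Setoid.ker_def.mpr (by rw [isLeft_topMid, isLeft_topMid, hα u v huv])
  · exact Setoid.ker_def.mpr (by cases u <;> cases v <;> rfl)

theorem rnk_eq_zero_iff {β : PM n} :
    rnk β = 0 ↔ ∀ i j, ¬β.r (Sum.inl i) (Sum.inr j) := by
  rw [rnk, Finite.card_eq_zero_iff, isEmpty_subtype]
  refine ⟨fun h i j hij => h _ ⟨⟨i, rfl⟩, ⟨j, (Quotient.sound hij).symm⟩⟩, ?_⟩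
  rintro h _ ⟨⟨i, rfl⟩, ⟨j, hj⟩⟩
  exact h i j (Quotient.exact hj.symm)

theorem rnk_eq_one_iff {β : PM n} :
    rnk β = 1 ↔ ∃ a b, β.r (Sum.inl a) (Sum.inr b) ∧
      ∀ i j, β.r (Sum.inl i) (Sum.inr j) → β.r (Sum.inl i) (Sum.inl a) := by
  rw [rnk, Nat.card_eq_one_iff_exists]
  constructor
  · rintro ⟨⟨_, ⟨a, rfl⟩, ⟨b, hb⟩⟩, h⟩
    refine ⟨a, b, Quotient.exact hb.symm, fun i j hij => Quotient.exact ?_⟩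
    exact congrArg Subtype.val (h ⟨_, ⟨i, rfl⟩, ⟨j, (Quotient.sound hij).symm⟩⟩)
  · rintro ⟨a, b, hab, h⟩
    refine ⟨⟨_, ⟨a, rfl⟩, ⟨b, (Quotient.sound hab).symm⟩⟩, ?_⟩
    rintro ⟨_, ⟨i, rfl⟩, ⟨j, hj⟩⟩
    exact Subtype.ext (Quotient.sound (h i j (Quotient.exact hj.symm)))

theorem side_eq_of_rnk_eq_zero {β : PM n} (h : rnk β = 0) {u v : V n} (huv : β.r u v) :
    side u = side v := by
  rcases u with i | i <;> rcases v with j | j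
  · rfl
  · exact absurd huv (rnk_eq_zero_iff.mp h i j)
  · exact absurd (β.symm' huv) (rnk_eq_zero_iff.mp h j i)
  · rfl

theorem hat_eq_self_of_rnk_eq_zero {α : PM n} (h : rnk α = 0) : hat α = α :=
  Setoid.ext fun _ _ => and_iff_left_of_imp (side_eq_of_rnk_eq_zero h)

theorem rnk_pmul_eq_zero {α : PM n} (hα : ∀ u v, α.r u v → side u = side v) (η : PM n) :
    rnk (pmul α η) = 0 :=
  rnk_eq_zero_iff.mpr fun i j h => by
    simpa [isLeft_topBot, side] using isLeft_eq_of_conn hα h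

theorem isLeft_eq_of_conn_hat {α η : PM n} {x y : W n} (h : conn (hat α) η x y) :
    x.isLeft = y.isLeft :=
  isLeft_eq_of_conn (α := hat α) (fun _ _ h => h.2) h

theorem conn_hat_le (α η : PM n) : connSetoid (hat α) η ≤ connSetoid α η :=
  Relation.EqvGen.mono fun _ _ => Or.imp_left fun ⟨u, v, huv, hx, hy⟩ => ⟨u, v, huv.1, hx, hy⟩

theorem Phi_eq_ncard (α β : PM n) : Phi α β = ((connSetoid α β).classesWithin isMid).ncard :=
  Nat.card_coe_set_eq _

section RankOne

variable {α : PM n} {a b : Fin n}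

theorem connSetoid_eq_glue (η : PM n) (hab : α.r (Sum.inl a) (Sum.inr b))
    (htr : ∀ i j, α.r (Sum.inl i) (Sum.inr j) → α.r (Sum.inl i) (Sum.inl a)) :
    connSetoid α η =
      (connSetoid (hat α) η).glue (topMid (Sum.inl a)) (topMid (Sum.inr b)) := by
  have hatEdge : ∀ {u v}, α.r u v → side u = side v → conn (hat α) η (topMid u) (topMid v) :=
    fun huv hs => .rel _ _ (.inl ⟨_, _, ⟨huv, hs⟩, rfl, rfl⟩)
  have cross : ∀ {i j}, α.r (Sum.inl i) (Sum.inr j) →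
      conn (hat α) η (topMid (Sum.inl i)) (topMid (Sum.inl a)) ∧
      conn (hat α) η (topMid (Sum.inr j)) (topMid (Sum.inr b)) := fun hij =>
    ⟨hatEdge (htr _ _ hij) rfl,
      hatEdge (α.trans' (α.symm' hij) (α.trans' (htr _ _ hij) hab)) rfl⟩
  refine le_antisymm (Setoid.eqvGen_le ?_)
    (Setoid.glue_le (conn_hat_le α η) (.rel _ _ (.inl ⟨_, _, hab, rfl, rfl⟩)))
  rintro _ _ (⟨u, v, huv, rfl, rfl⟩ | ⟨u, v, huv, rfl, rfl⟩)
  · rcases u with i | i <;> rcases v with j | j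
    · exact .inl (hatEdge huv rfl)
    · exact .inr ⟨.inl (cross huv).1, .inr (cross huv).2⟩
    · exact .inr ⟨.inr (cross (α.symm' huv)).2, .inl (cross (α.symm' huv)).1⟩
    · exact .inl (hatEdge huv rfl)
  · exact .inl (.rel _ _ (.inr ⟨u, v, huv, rfl, rfl⟩))

theorem pmul_rel_inl_inr_iff {η : PM n} (hab : α.r (Sum.inl a) (Sum.inr b))
    (htr : ∀ i j, α.r (Sum.inl i) (Sum.inr j) → α.r (Sum.inl i) (Sum.inl a)) {i j : Fin n} :
    (pmul α η).r (Sum.inl i) (Sum.inr j) ↔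
      conn (hat α) η (Sum.inl i) (topMid (Sum.inl a)) ∧
      conn (hat α) η (topMid (Sum.inr b)) (Sum.inr (Sum.inr j)) := by
  change connSetoid α η _ _ ↔ _
  rw [connSetoid_eq_glue η hab htr]
  constructor
  · rintro (h | ⟨h₁ | h₁, h₂ | h₂⟩)
    · nomatch isLeft_eq_of_conn_hat h
    · nomatch isLeft_eq_of_conn_hat h₂
    · exact ⟨h₁, (connSetoid (hat α) η).symm' h₂⟩
    · nomatch isLeft_eq_of_conn_hat h₁
    · nomatch isLeft_eq_of_conn_hat h₁
  · exact fun ⟨h₁, h₂⟩ => .inr ⟨.inl h₁, .inr ((connSetoid (hat α) η).symm' h₂)⟩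

open Classical in
theorem rnk_pmul_of_rnk_eq_one (η : PM n) (hab : α.r (Sum.inl a) (Sum.inr b))
    (htr : ∀ i j, α.r (Sum.inl i) (Sum.inr j) → α.r (Sum.inl i) (Sum.inl a)) :
    rnk (pmul α η) =
      if ∃ j, conn (hat α) η (topMid (Sum.inr b)) (Sum.inr (Sum.inr j)) then 1 else 0 := by
  split_ifs with hreach
  · obtain ⟨j, hj⟩ := hreach
    refine rnk_eq_one_iff.mpr ⟨a, j, (pmul_rel_inl_inr_iff hab htr).mpr ⟨.refl _, hj⟩, ?_⟩
    exact fun i j h => conn_hat_le α η ((pmul_rel_inl_inr_iff hab htr).mp h).1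
  · exact rnk_eq_zero_iff.mpr fun i j h => hreach ⟨j, ((pmul_rel_inl_inr_iff hab htr).mp h).2⟩

open Classical in
theorem Phi_hat_of_rnk_eq_one (η : PM n) (hab : α.r (Sum.inl a) (Sum.inr b))
    (htr : ∀ i j, α.r (Sum.inl i) (Sum.inr j) → α.r (Sum.inl i) (Sum.inl a)) :
    Phi (hat α) η = Phi α η +
      if ∃ j, conn (hat α) η (topMid (Sum.inr b)) (Sum.inr (Sum.inr j)) then 0 else 1 := by
  set σ := connSetoid (hat α) η
  have hfloat : Quotient.mk σ (topMid (Sum.inr b)) ∈ σ.classesWithin isMid ↔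
      ¬∃ j, conn (hat α) η (topMid (Sum.inr b)) (Sum.inr (Sum.inr j)) := by
    rw [Setoid.mk_mem_classesWithin]
    constructor
    · rintro h ⟨j, hj⟩
      obtain ⟨_, hj'⟩ := h _ (σ.symm' hj)
      simp at hj'
    · rintro h (i | i | j) hy
      · nomatch isLeft_eq_of_conn_hat hy
      · exact ⟨i, rfl⟩
      · exact absurd ⟨j, σ.symm' hy⟩ h
  rw [Phi_eq_ncard, Phi_eq_ncard, connSetoid_eq_glue η hab htr,
    Setoid.ncard_classesWithin_glue _ (by rintro ⟨_, ⟨⟩⟩)]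
  split_ifs with hreach
  · rw [Set.sdiff_singleton_eq_self (hfloat.not_left.mpr hreach), add_zero]
  · exact (Set.ncard_sdiff_singleton_add_one (hfloat.mpr hreach)).symm

end RankOne

theorem rnk_sub_rnk_pmul {α : PM n} (hα : rnk α ≤ 1) (η : PM n) :
    (rnk α : ℤ) - rnk (pmul α η) = (Phi (hat α) η : ℤ) - Phi α η := by
  rcases Nat.le_one_iff_eq_zero_or_eq_one.mp hα with h0 | h1
  · rw [hat_eq_self_of_rnk_eq_zero h0, h0,
      rnk_pmul_eq_zero (fun _ _ => side_eq_of_rnk_eq_zero h0), sub_self, sub_self]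
  · obtain ⟨a, b, hab, htr⟩ := rnk_eq_one_iff.mp h1
    rw [h1, rnk_pmul_of_rnk_eq_one η hab htr, Phi_hat_of_rnk_eq_one η hab htr]
    split_ifs <;> push_cast <;> ring

/-- The anti-involution `α ↦ α*` of `P_n`. -/
def flipRows (α : PM n) : PM n := α.comap Sum.swap

def flipLayers : W n → W n
  | Sum.inl i => Sum.inr (Sum.inr i)
  | Sum.inr (Sum.inl i) => Sum.inr (Sum.inl i)
  | Sum.inr (Sum.inr i) => Sum.inl i

@[simp]
theorem flipRows_apply (α : PM n) (x y : V n) : flipRows α x y ↔ α x.swap y.swap := Iff.rfl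

theorem flipRows_flipRows (α : PM n) : flipRows (flipRows α) = α :=
  Setoid.ext fun x y => by simp

theorem flipLayers_involutive : Function.Involutive (flipLayers (n := n)) := by
  rintro (i | i | i) <;> rfl

theorem flipLayers_topMid (u : V n) : flipLayers (topMid u) = midBot u.swap := by
  cases u <;> rfl

theorem flipLayers_midBot (u : V n) : flipLayers (midBot u) = topMid u.swap := by
  cases u <;> rfl

theorem flipLayers_topBot (u : V n) : flipLayers (topBot u) = topBot u.swap := by
  cases u <;> rfl

theorem isMid_flipLayers (x : W n) : isMid (flipLayers x) ↔ isMid x := by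
  rcases x with i | i | i <;> simp [flipLayers, isMid]

theorem conn_flipLayers {α β : PM n} {x y : W n} (h : conn α β x y) :
    conn (flipRows β) (flipRows α) (flipLayers x) (flipLayers y) := by
  refine Relation.EqvGen.map flipLayers ?_ h
  rintro _ _ (⟨u, v, huv, rfl, rfl⟩ | ⟨u, v, huv, rfl, rfl⟩)
  · refine .inr ⟨u.swap, v.swap, ?_, flipLayers_topMid u, flipLayers_topMid v⟩
    simpa using huv
  · refine .inl ⟨u.swap, v.swap, ?_, flipLayers_midBot u, flipLayers_midBot v⟩
    simpa using huv

theorem conn_flipLayers_iff {α β : PM n} {x y : W n} :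
    conn (flipRows β) (flipRows α) (flipLayers x) (flipLayers y) ↔ conn α β x y := by
  refine ⟨fun h => ?_, conn_flipLayers⟩
  simpa only [flipRows_flipRows, flipLayers_involutive _] using conn_flipLayers h

theorem pmul_flipRows (α β : PM n) : pmul (flipRows β) (flipRows α) = flipRows (pmul α β) :=
  Setoid.ext fun x y => by
    change conn _ _ _ _ ↔ conn _ _ _ _
    simpa only [flipLayers_topBot, Sum.swap_swap] using
      (conn_flipLayers_iff (x := topBot x.swap) (y := topBot y.swap) (α := α) (β := β))

theorem hat_flipRows (α : PM n) : hat (flipRows α) = flipRows (hat α) :=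
  Setoid.ext fun x y => by
    change (α _ _ ∧ _) ↔ (α _ _ ∧ _)
    rcases x with i | i <;> rcases y with j | j <;> simp [side]

theorem rnk_flipRows (α : PM n) : rnk (flipRows α) = rnk α := by
  refine Quotient.card_subtype_congr (Equiv.sumComm _ _) (fun _ _ => Iff.rfl) fun x => ?_
  simp only [Quotient.eq, flipRows_apply, Sum.swap_inl, Sum.swap_inr, Equiv.sumComm_apply]
  exact and_comm

theorem Phi_flipRows (α β : PM n) : Phi (flipRows β) (flipRows α) = Phi α β := by
  let e : W n ≃ W n := flipLayers_involutive.toPerm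
  refine (Quotient.card_subtype_congr e (fun _ _ => conn_flipLayers_iff.symm) fun x => ?_).symm
  conv_rhs => rw [← e.forall_congr_right]
  simp only [Quotient.eq, e, Function.Involutive.coe_toPerm, isMid_flipLayers]
  exact forall_congr' fun _ => imp_congr_left conn_flipLayers_iff.symm

theorem rank_drop_general (n : ℕ) (α : PM n) (hα : rnk α ≤ 1) (η : PM n) :
    (rnk α : ℤ) - (rnk (pmul α η) : ℤ) = (Phi (hat α) η : ℤ) - (Phi α η : ℤ) ∧
    (rnk α : ℤ) - (rnk (pmul η α) : ℤ) = (Phi η (hat α) : ℤ) - (Phi η α : ℤ) := by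
  refine ⟨rnk_sub_rnk_pmul hα η, ?_⟩
  have h := rnk_sub_rnk_pmul (α := flipRows α) (by rwa [rnk_flipRows]) (flipRows η)
  rwa [rnk_flipRows, pmul_flipRows, rnk_flipRows, hat_flipRows, Phi_flipRows, Phi_flipRows] at h

/-- For `α ∈ I_1` and any `η ∈ P_n`:
`rank α − rank(αη) = Φ(α̂,η) − Φ(α,η)` and `rank α − rank(ηα) = Φ(η,α̂) − Φ(η,α)`,
as integers. -/
theorem rank_drop (n : ℕ) (hn : 1 ≤ n) (α : PM n) (hα : rnk α ≤ 1) (η : PM n) :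
    (rnk α : ℤ) - (rnk (pmul α η) : ℤ) = (Phi (hat α) η : ℤ) - (Phi α η : ℤ) ∧
    (rnk α : ℤ) - (rnk (pmul η α) : ℤ) = (Phi η (hat α) : ℤ) - (Phi η α : ℤ) :=
  rank_drop_general n α hα η

end TPM
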